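/- In a non-degenerate Euclidean TSP instance, every 2-optimal tour is simple, i.e., viewing each tour edge as the closed line segment between its endpoints, no two edges of the tour intersect in a point that lies in the interior of at least one of the two corresponding segments. -/

import Mathlib

/-!
If two edges `ab` and `xy` of a tour meet in a point `z`, then
`|ab| + |xy| = |az| + |zb| + |xz| + |zy| ≥ |ax| + |by|`, so 2-optimality forces equality and `z`
lies on the segments `ax` and `by`. When `z` is interior to `ab`, strict convexity of the norm puts
`a, b, x, y` on one line `ℓ`, the two edges running over a common interval of `ℓ` in opposite
directions. For such an opposed pair the 2-opt inequality pushes the tour along `ℓ`: the point after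
`b` or the point before `x` lies on `ℓ` as well, and the edge it spans forms a new opposed pair,
with a shorter arc of the tour between the two edges. Walking both arcs between `ab` and `xy` in
this way puts every point of the tour on `ℓ`.
-/

open Classical

/-- The `p`-norm distance between two points of `ℝ²`. For `p = 2` this is the
Euclidean distance. -/
noncomputable def pdist (p : ℝ) (a b : ℝ × ℝ) : ℝ :=
  (|a.1 - b.1| ^ p + |a.2 - b.2| ^ p) ^ (1 / p)

/-- `L` is a tour (Hamiltonian cycle) of the finite point set `V`. -/
def IsTour (V : Finset (ℝ × ℝ)) (L : List (ℝ × ℝ)) : Prop :=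
  L.Nodup ∧ L.toFinset = V

/-- The (oriented) tour `L` is 2-optimal: for any two distinct directed edges
`(a,b)` and `(x,y)` of the tour, `c(a,x) + c(b,y) ≥ c(a,b) + c(x,y)`. -/
def IsTwoOptimal (p : ℝ) (L : List (ℝ × ℝ)) : Prop :=
  ∀ e ∈ L.zip (L.rotate 1), ∀ f ∈ L.zip (L.rotate 1), e ≠ f →
    pdist p e.1 e.2 + pdist p f.1 f.2 ≤ pdist p e.1 f.1 + pdist p e.2 f.2

/-- A tour is simple if, viewing each edge as the closed line segment between
its endpoints, no two distinct edges intersect in a point lying in the interior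
(the open segment) of at least one of the two segments. -/
def IsSimpleTour (L : List (ℝ × ℝ)) : Prop :=
  ∀ e ∈ L.zip (L.rotate 1), ∀ f ∈ L.zip (L.rotate 1), e ≠ f →
    ∀ z : ℝ × ℝ, z ∈ segment ℝ e.1 e.2 → z ∈ segment ℝ f.1 f.2 →
      z ∉ openSegment ℝ e.1 e.2 ∧ z ∉ openSegment ℝ f.1 f.2

open Set Function

/-- `p k` is the `k`-th point of a closed tour through `n` distinct points; the tour is indexed
by `ℤ` with period `n`, so that `p k → p (k + 1)` runs over its directed edges. -/
structure IsTwoOptimalTour {P : Type*} [MetricSpace P] (n : ℕ) (p : ℤ → P) : Prop where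
  one_lt : 1 < n
  eq_iff_modEq : ∀ k l, p k = p l ↔ k ≡ l [ZMOD n]
  two_opt : ∀ k l, p k ≠ p l → dist (p k) (p (k + 1)) + dist (p l) (p (l + 1)) ≤
    dist (p k) (p l) + dist (p (k + 1)) (p (l + 1))

namespace IsTwoOptimalTour

variable {P : Type*} [MetricSpace P] {n : ℕ} {p : ℤ → P}

theorem periodic (hp : IsTwoOptimalTour n p) : Periodic p n := fun k =>
  (hp.eq_iff_modEq _ _).2 (Int.add_emod_right k n)

theorem apply_ne_apply_add_one (hp : IsTwoOptimalTour n p) (k : ℤ) : p k ≠ p (k + 1) := by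
  rw [Ne, hp.eq_iff_modEq, Int.modEq_iff_dvd, add_sub_cancel_left, Int.natCast_dvd_ofNat,
    Nat.dvd_one]
  exact hp.one_lt.ne'

theorem apply_add_one_eq (hp : IsTwoOptimalTour n p) {k l : ℤ} (h : p k = p l) :
    p (k + 1) = p (l + 1) :=
  (hp.eq_iff_modEq _ _).2 (((hp.eq_iff_modEq _ _).1 h).add_right 1)

end IsTwoOptimalTour

theorem Collinear.image {k V₁ P₁ V₂ P₂ : Type*} [DivisionRing k] [AddCommGroup V₁] [Module k V₁]
    [AddTorsor V₁ P₁] [AddCommGroup V₂] [Module k V₂] [AddTorsor V₂ P₂] {s : Set P₁}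
    (h : Collinear k s) (f : P₁ →ᵃ[k] P₂) : Collinear k (f '' s) := by
  obtain ⟨p₀, v, hv⟩ := (collinear_iff_exists_forall_eq_smul_vadd s).1 h
  refine (collinear_iff_exists_forall_eq_smul_vadd _).2 ⟨f p₀, f.linear v, ?_⟩
  rintro _ ⟨q, hq, rfl⟩
  obtain ⟨r, rfl⟩ := hv q hq
  exact ⟨r, by rw [f.map_vadd, f.linear.map_smul]⟩

theorem collinear_of_subset_affineSpan_pair {k V P : Type*} [DivisionRing k] [AddCommGroup V]
    [Module k V] [AddTorsor V P] {s : Set P} {a b : P} (h : s ⊆ line[k, a, b]) :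
    Collinear k s :=
  (Submodule.rank_mono ((vectorSpan_mono k h).trans (direction_affineSpan k _).le)).trans
    (collinear_pair k a b)

section LineCoordinate

variable {E : Type*} [NormedAddCommGroup E] [NormedSpace ℝ E]

theorem exists_dist_eq_abs_sub_on_affineSpan_pair {a b : E} (hab : a ≠ b) :
    ∃ g : StrongDual ℝ E, g a < g b ∧
      ∀ x ∈ line[ℝ, a, b], ∀ y ∈ line[ℝ, a, b], dist x y = |g x - g y| := by
  obtain ⟨g, -, hg⟩ := exists_dual_vector ℝ (b - a) (norm_ne_zero_iff.2 (sub_ne_zero.2 hab.symm))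
  refine ⟨g, ?_, fun x hx y hy => ?_⟩
  · have : 0 < g (b - a) := by rw [hg]; exact norm_pos_iff.2 (sub_ne_zero.2 hab.symm)
    rw [map_sub] at this
    linarith
  · have hxy := AffineSubspace.vsub_mem_direction hx hy
    rw [direction_affineSpan, vectorSpan_pair_rev, Submodule.mem_span_singleton] at hxy
    obtain ⟨r, hr⟩ := hxy
    rw [dist_eq_norm, ← map_sub, show x - y = r • (b - a) from hr.symm, norm_smul, map_smul, hg,
      smul_eq_mul, abs_mul, Real.norm_eq_abs, RCLike.ofReal_real_eq_id, id, abs_norm]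

theorem mem_and_le_of_wbtw (ℓ : AffineSubspace ℝ E) (g : StrongDual ℝ E) {x y z : E}
    (h : Wbtw ℝ x y z) (hx : x ∈ ℓ) (hy : y ∈ ℓ) (hxy : g x < g y) : z ∈ ℓ ∧ g y ≤ g z := by
  refine ⟨ℓ.right_mem_of_wbtw h hx hy (ne_of_apply_ne g hxy.ne), ?_⟩
  obtain ⟨t, ⟨ht₀, ht₁⟩, rfl⟩ := h
  rw [AffineMap.lineMap_apply_module, map_add, map_smul, map_smul, smul_eq_mul,
    smul_eq_mul] at hxy ⊢
  have hxz : 0 < g z - g x := pos_of_mul_pos_right (by linarith : 0 < t * (g z - g x)) ht₀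
  nlinarith [mul_nonneg (sub_nonneg.2 ht₁) hxz.le]

variable [StrictConvexSpace ℝ E]

theorem wbtw_and_wbtw_of_two_opt {a b x y z : E} (hab : z ∈ segment ℝ a b)
    (hxy : z ∈ segment ℝ x y) (h : dist a b + dist x y ≤ dist a x + dist b y) :
    Wbtw ℝ a z x ∧ Wbtw ℝ b z y := by
  rw [mem_segment_iff_wbtw, ← dist_add_dist_eq_iff] at hab hxy
  have hazx := dist_triangle a z x
  have hbzy := dist_triangle b z y
  rw [← dist_add_dist_eq_iff, ← dist_add_dist_eq_iff]
  constructor <;> linarith [dist_comm x z, dist_comm z b]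

theorem mem_and_lt_of_two_opt {ℓ : AffineSubspace ℝ E} {g : StrongDual ℝ E}
    (hg : ∀ x ∈ ℓ, ∀ y ∈ ℓ, dist x y = |g x - g y|) {w x y z : E} (hw : w ∈ ℓ) (hx : x ∈ ℓ)
    (hy : y ∈ ℓ) (hwx : g w < g x) (hxy : g x < g y) (hxz : x ≠ z)
    (hopt : dist y w + dist x z ≤ dist y x + dist w z) : z ∈ ℓ ∧ g x < g z := by
  have hywx : dist y w = dist y x + dist w x := by
    rw [hg y hy w hw, hg y hy x hx, hg w hw x hx, abs_of_pos (by linarith),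
      abs_of_pos (by linarith), abs_of_neg (by linarith)]
    ring
  have hwxz : Wbtw ℝ w x z :=
    dist_add_dist_eq_iff.1 (le_antisymm (by linarith) (dist_triangle w x z))
  obtain ⟨hz, hle⟩ := mem_and_le_of_wbtw ℓ g hwxz hw hx hwx
  refine ⟨hz, hle.lt_of_ne fun h => hxz ?_⟩
  rw [← dist_eq_zero, hg x hx z hz, h, sub_self, abs_zero]

end LineCoordinate

section Overlap

variable {E : Type*} [NormedAddCommGroup E] [NormedSpace ℝ E]

/-- The directed edges `p i → p (i + 1)` and `p j → p (j + 1)` lie on the line `ℓ` and, read in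
the coordinate `g`, run in opposite directions over a common open interval. -/
structure OpposedOverlap (ℓ : AffineSubspace ℝ E) (g : StrongDual ℝ E) (p : ℤ → E) (i j : ℤ) :
    Prop where
  left_mem : p i ∈ ℓ
  left_succ_mem : p (i + 1) ∈ ℓ
  right_mem : p j ∈ ℓ
  right_succ_mem : p (j + 1) ∈ ℓ
  max_lt_min : max (g (p i)) (g (p (j + 1))) < min (g (p (i + 1))) (g (p j))

namespace OpposedOverlap

variable {ℓ : AffineSubspace ℝ E} {g : StrongDual ℝ E} {p : ℤ → E} {i j : ℤ}

theorem swap_neg (h : OpposedOverlap ℓ g p i j) : OpposedOverlap ℓ (-g) p j i := by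
  refine ⟨h.right_mem, h.right_succ_mem, h.left_mem, h.left_succ_mem, ?_⟩
  have := h.max_lt_min
  simp only [neg_apply, max_lt_iff, lt_min_iff, neg_lt_neg_iff] at this ⊢
  tauto

theorem congr_right {j' : ℤ} (h : OpposedOverlap ℓ g p i j) (h₀ : p j' = p j)
    (h₁ : p (j' + 1) = p (j + 1)) : OpposedOverlap ℓ g p i j' := by
  obtain ⟨hi, hi₁, hj, hj₁, hlt⟩ := h
  exact ⟨hi, hi₁, h₀ ▸ hj, h₁ ▸ hj₁, by rwa [h₀, h₁]⟩

variable [StrictConvexSpace ℝ E] {n : ℕ} (hp : IsTwoOptimalTour n p)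
  (hg : ∀ x ∈ ℓ, ∀ y ∈ ℓ, dist x y = |g x - g y|)
include hp hg

theorem succ_left (h : OpposedOverlap ℓ g p i j) (hlt : g (p (i + 1)) < g (p j)) :
    OpposedOverlap ℓ g p (i + 1) j := by
  obtain ⟨-, hi₁, hj, hj₁, hgap⟩ := h
  simp only [max_lt_iff, lt_min_iff] at hgap
  obtain ⟨hi₂, hlt₂⟩ := mem_and_lt_of_two_opt hg hj₁ hi₁ hj hgap.1.2 hlt
    (hp.apply_ne_apply_add_one _) (hp.two_opt j (i + 1) (ne_of_apply_ne g hlt.ne'))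
  refine ⟨hi₁, hi₂, hj, hj₁, ?_⟩
  simp only [max_lt_iff, lt_min_iff]
  exact ⟨⟨hlt₂, by linarith⟩, hlt, hgap.2.2⟩

theorem of_succ_right (h : OpposedOverlap ℓ g p i (j + 1)) (hlt : g (p (j + 1)) < g (p (i + 1))) :
    OpposedOverlap ℓ g p i j := by
  obtain ⟨hi, hi₁, hj₁, -, hgap⟩ := h
  simp only [max_lt_iff, lt_min_iff] at hgap
  have hij : p i ≠ p j := fun h => hlt.ne (congrArg g (hp.apply_add_one_eq h).symm)
  have hopt := hp.two_opt i j hij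
  rw [dist_comm (p i) (p (i + 1)), dist_comm (p j) (p (j + 1))] at hopt
  obtain ⟨hj, hlt'⟩ := mem_and_lt_of_two_opt hg hi hj₁ hi₁ hgap.2.1 hlt
    (hp.apply_ne_apply_add_one j).symm (by linarith)
  refine ⟨hi, hi₁, hj, hj₁, ?_⟩
  simp only [max_lt_iff, lt_min_iff]
  exact ⟨⟨hgap.1.1, hlt⟩, by linarith, hlt'⟩

theorem mem_of_mem_Ioc (h : OpposedOverlap ℓ g p i j) (hji : j ≤ i + n) {k : ℤ}
    (hk : k ∈ Ioc i j) : p k ∈ ℓ := by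
  obtain ⟨d, hd⟩ : ∃ d : ℕ, j - i = d := ⟨(j - i).toNat, by obtain ⟨_, _⟩ := hk; omega⟩
  induction d generalizing i j with
  | zero => obtain ⟨_, _⟩ := hk; omega
  | succ d ih =>
    obtain ⟨hik, hkj⟩ := hk
    obtain rfl | hkj := hkj.eq_or_lt
    · exact h.right_mem
    rcases lt_trichotomy (g (p (i + 1))) (g (p j)) with hlt | heq | hgt
    · obtain rfl | hik := (Int.add_one_le_of_lt hik).eq_or_lt
      · exact h.left_succ_mem
      exact ih (h.succ_left hp hg hlt) (by omega) ⟨hik, hkj.le⟩ (by omega)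
    · -- `p (i + 1) = p j` with `i + 1 < j ≤ i + n` would repeat a point within one period
      have hmod := (hp.eq_iff_modEq _ _).1 (dist_eq_zero.1 (by
        rw [hg _ h.left_succ_mem _ h.right_mem, heq, sub_self, abs_zero]))
      have := Int.eq_zero_of_dvd_of_nonneg_of_lt (by omega) (by omega) hmod.dvd
      omega
    · obtain ⟨j, rfl⟩ : ∃ j', j = j' + 1 := ⟨j - 1, by ring⟩
      exact ih (h.of_succ_right hp hg hgt) (by omega) ⟨hik, by omega⟩ (by omega)

theorem forall_mem (h : OpposedOverlap ℓ g p i j) (k : ℤ) : p k ∈ ℓ := by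
  have hn : (0 : ℤ) < n := by exact_mod_cast hp.one_lt.trans' zero_lt_one
  wlog hj : j ∈ Ioc i (i + n) generalizing j
  · obtain ⟨m, hm, -⟩ := existsUnique_add_zsmul_mem_Ioc hn j i
    refine this (h.congr_right ((hp.periodic.zsmul m) j) ?_) hm
    rw [add_right_comm, (hp.periodic.zsmul m) (j + 1)]
  obtain ⟨k', hk', hkk'⟩ := hp.periodic.exists_mem_Ioc hn k i
  rw [hkk']
  rcases le_or_gt k' j with hk'j | hjk'
  · exact h.mem_of_mem_Ioc hp hg hj.2 ⟨hk'.1, hk'j⟩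
  · refine (h.swap_neg.congr_right (hp.periodic i) ?_).mem_of_mem_Ioc hp ?_
      (add_le_add_left hj.1.le _) ⟨hjk', hk'.2⟩
    · rw [add_right_comm, hp.periodic (i + 1)]
    · simpa only [neg_apply, neg_sub_neg, abs_sub_comm] using hg

end OpposedOverlap

end Overlap

theorem IsTwoOptimalTour.collinear_range_of_mem_openSegment {E : Type*} [NormedAddCommGroup E]
    [NormedSpace ℝ E] [StrictConvexSpace ℝ E] {n : ℕ} {p : ℤ → E} (hp : IsTwoOptimalTour n p)
    {i j : ℤ} (hij : p i ≠ p j) {z : E} (hzi : z ∈ openSegment ℝ (p i) (p (i + 1)))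
    (hzj : z ∈ segment ℝ (p j) (p (j + 1))) : Collinear ℝ (range p) := by
  obtain ⟨hazx, hbzy⟩ := wbtw_and_wbtw_of_two_opt (openSegment_subset_segment _ _ _ hzi) hzj
    (hp.two_opt i j hij)
  obtain ⟨g, hab, hg⟩ := exists_dist_eq_abs_sub_on_affineSpan_pair (hp.apply_ne_apply_add_one i)
  set ℓ := line[ℝ, p i, p (i + 1)]
  have ha : p i ∈ ℓ := left_mem_affineSpan_pair _ _ _
  have hb : p (i + 1) ∈ ℓ := right_mem_affineSpan_pair _ _ _
  have hz : z ∈ ℓ :=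
    (mem_segment_iff_wbtw.1 (openSegment_subset_segment _ _ _ hzi)).mem_affineSpan
  have hgz : g z ∈ Ioo (g (p i)) (g (p (i + 1))) := by
    rw [← openSegment_eq_Ioo hab]
    exact image_openSegment ℝ (g : E →ₗ[ℝ] ℝ).toAffineMap _ _ ▸ mem_image_of_mem _ hzi
  obtain ⟨hx, hzx⟩ := mem_and_le_of_wbtw ℓ g hazx ha hz hgz.1
  obtain ⟨hy, hzy⟩ := mem_and_le_of_wbtw ℓ (-g) hbzy hb hz (neg_lt_neg hgz.2)
  rw [neg_apply, neg_apply, neg_le_neg_iff] at hzy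
  have hyx : g (p (j + 1)) < g (p j) := (hzy.trans hzx).lt_of_ne fun h =>
    hp.apply_ne_apply_add_one j (dist_eq_zero.1 (by rw [hg _ hx _ hy, h, sub_self, abs_zero]))
  have hover : OpposedOverlap ℓ g p i j := by
    refine ⟨ha, hb, hx, hy, ?_⟩
    simp only [max_lt_iff, lt_min_iff]
    refine ⟨⟨?_, ?_⟩, ?_, hyx⟩ <;> linarith [hgz.1, hgz.2]
  exact collinear_of_subset_affineSpan_pair (range_subset_iff.2 (hover.forall_mem hp hg))

theorem List.Nodup.exists_cyclic_enumeration {α : Type*} {L : List α} (hL : L.Nodup)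
    (hne : L ≠ []) : ∃ p : ℤ → α, (∀ k l, p k = p l ↔ k ≡ l [ZMOD L.length]) ∧
      {x | x ∈ L} = Set.range p ∧ ∀ e, e ∈ L.zip (L.rotate 1) ↔ ∃ k, (p k, p (k + 1)) = e := by
  have hn : 0 < L.length := List.length_pos_iff.2 hne
  have hmod : ∀ k : ℤ, 0 ≤ k % L.length ∧ k % L.length < L.length := fun k =>
    ⟨Int.emod_nonneg k (by omega), Int.emod_lt_of_pos k (by omega)⟩
  set p : ℤ → α := fun k => L[(k % L.length).toNat]'(by have := hmod k; omega)
  have hp : ∀ k l, p k = p l ↔ k ≡ l [ZMOD L.length] := fun k l => by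
    rw [hL.getElem_inj_iff, Int.ModEq]
    have := hmod k
    have := hmod l
    omega
  have hnat : ∀ m : ℕ, (hm : m < L.length) → p m = L[m] := fun m hm => by
    simp only [p, ← Int.natCast_mod, Int.toNat_natCast, Nat.mod_eq_of_lt hm]
  have hrep : ∀ k : ℤ, ∃ m < L.length, k ≡ m [ZMOD L.length] := fun k =>
    ⟨(k % L.length).toNat, by have := hmod k; omega, by
      rw [Int.toNat_of_nonneg (hmod k).1]; exact (Int.mod_modEq k _).symm⟩
  have hedge : ∀ m (hm : m < L.length),
      (p m, p (m + 1)) = (L[m], L[(m + 1) % L.length]'(Nat.mod_lt _ hn)) := fun m hm => by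
    have hsucc : (m : ℤ) + 1 ≡ ((m + 1) % L.length : ℕ) [ZMOD L.length] := by
      push_cast [Int.natCast_mod]
      exact (Int.mod_modEq _ _).symm
    rw [← hnat m hm, ← hnat _ (Nat.mod_lt _ hn), (hp _ _).2 hsucc]
  refine ⟨p, hp, Set.ext fun x => ⟨fun hx => ?_, ?_⟩, fun e => ?_⟩
  · obtain ⟨m, hm, rfl⟩ := List.getElem_of_mem hx
    exact ⟨m, hnat m hm⟩
  · rintro ⟨k, rfl⟩
    exact List.getElem_mem _
  rw [List.mem_iff_getElem]
  constructor
  · rintro ⟨m, hm, rfl⟩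
    rw [List.length_zip, List.length_rotate, min_self] at hm
    exact ⟨m, by rw [hedge m hm, List.getElem_zip, List.getElem_rotate]⟩
  · rintro ⟨k, rfl⟩
    obtain ⟨m, hm, hkm⟩ := hrep k
    refine ⟨m, by simpa using hm, ?_⟩
    rw [List.getElem_zip, List.getElem_rotate, (hp k m).2 hkm, (hp _ _).2 (hkm.add_right 1),
      hedge m hm]

section EuclideanPlane

open WithLp

theorem pdist_two_eq_dist (a b : ℝ × ℝ) : pdist 2 a b = dist (toLp 2 a) (toLp 2 b) := by
  rw [prod_dist_eq_of_L2, pdist, Real.sqrt_eq_rpow]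
  simp [Real.dist_eq]

theorem IsTwoOptimal.isTwoOptimalTour_toLp {L : List (ℝ × ℝ)} {p : ℤ → ℝ × ℝ}
    (h2 : IsTwoOptimal 2 L) (hn : 1 < L.length) (hp : ∀ k l, p k = p l ↔ k ≡ l [ZMOD L.length])
    (hedge : ∀ k, (p k, p (k + 1)) ∈ L.zip (L.rotate 1)) :
    IsTwoOptimalTour L.length fun k => toLp 2 (p k) where
  one_lt := hn
  eq_iff_modEq k l := by rw [(toLp_injective 2).eq_iff, hp]
  two_opt k l hkl := by
    simpa only [pdist_two_eq_dist] using
      h2 _ (hedge k) _ (hedge l) fun h => hkl (congrArg (toLp 2 ∘ Prod.fst) h)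

end EuclideanPlane

theorem two_opt_simple (V : Finset (ℝ × ℝ))
    (hnd : ¬ Collinear ℝ (V : Set (ℝ × ℝ)))
    (L : List (ℝ × ℝ)) (hL : IsTour V L) (h2 : IsTwoOptimal 2 L) :
    IsSimpleTour L := by
  obtain ⟨hnodup, rfl⟩ := hL
  intro e he f hf hef z hze hzf
  have hne : L ≠ [] := by rintro rfl; simp at he
  obtain ⟨p, hp, hrange, hedge⟩ := hnodup.exists_cyclic_enumeration hne
  obtain ⟨i, rfl⟩ := (hedge e).1 he
  obtain ⟨j, rfl⟩ := (hedge f).1 hf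
  have hij : ¬ i ≡ j [ZMOD L.length] := fun h =>
    hef (by rw [(hp i j).2 h, (hp _ _).2 (h.add_right 1)])
  have hn : 1 < L.length := Nat.one_lt_iff_ne_zero_and_ne_one.2
    ⟨by simpa using hne, fun h => hij (by rw [h, Nat.cast_one]; exact Int.modEq_one)⟩
  have htour := h2.isTwoOptimalTour_toLp hn hp fun k => (hedge _).2 ⟨k, rfl⟩
  let φ := WithLp.linearEquiv 2 ℝ (ℝ × ℝ)
  have key : ∀ {k l}, ¬ k ≡ l [ZMOD L.length] → z ∈ openSegment ℝ (p k) (p (k + 1)) →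
      z ∈ segment ℝ (p l) (p (l + 1)) → False := fun hkl hk hl => hnd <| by
    have hcol := htour.collinear_range_of_mem_openSegment (by simpa [hp] using hkl)
      (image_openSegment ℝ φ.symm.toLinearMap.toAffineMap _ _ ▸ mem_image_of_mem _ hk)
      (image_segment ℝ φ.symm.toLinearMap.toAffineMap _ _ ▸ mem_image_of_mem _ hl)
    rw [List.coe_toFinset, hrange]
    -- `ℝ × ℝ` is a torsor over itself both as a module and as a product of torsors
    convert hcol.image φ.toLinearMap.toAffineMap using 1
    · rfl
    · rw [← range_comp]
      rfl
  exact ⟨fun h => key hij h hzf, fun h => key (fun h' => hij h'.symm) h hze⟩
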